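/- arXiv:1502.06095 — 6 statements merged into one kernel-verified Lean document; each statement's English description precedes it below -/
import Mathlib

section
/- Let T be a monad and B a functor on a category C, and let λ : TB ⇒ BT be a distributive law of the monad T over the functor B (i.e., λ is compatible with the unit and multiplication of T). Given a coalgebra p : X → BTX, define p* : TX → BTX as the composite B(μ_X) ∘ λ_{TX} ∘ T(p). Then (TX, μ_X, p*) is a λ-bialgebra, i.e., the diagram p* ∘ μ_X = B(μ_X) ∘ λ_{TX} ∘ T(p*) commutes. -/
/-!
The composite `a = B(μ_X) ∘ λ_{TX}` makes `BTX` satisfy the associativity law of a `T`-algebra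
(this uses only the multiplication axiom of `λ`), and `p*` is the extension `a ∘ T(p)` of `p`
along this structure. For any morphism into an object with an associative `T`-action, such an
extension is a homomorphism out of the free structure `(TX, μ_X)`, which is the claim.
-/

open CategoryTheory

universe v u

namespace CategoryTheory.Monad

variable {C : Type u} [Category.{v} C] (T : Monad C)

theorem mu_app_map_comp_eq_map_map_comp {X A : C} (a : T.obj A ⟶ A)
    (ha : T.μ.app A ≫ a = T.map a ≫ a) (p : X ⟶ A) :
    T.μ.app X ≫ T.map p ≫ a = T.map (T.map p ≫ a) ≫ a := by
  rw [← T.μ.naturality_assoc, ha, Functor.comp_map, T.map_comp, Category.assoc]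

theorem mu_app_comp_distrib_eq_map_comp_distrib (B : C ⥤ C)
    (lam : B ⋙ T.toFunctor ⟶ T.toFunctor ⋙ B)
    (h_mult : ∀ Y : C, T.μ.app (B.obj Y) ≫ lam.app Y =
      T.map (lam.app Y) ≫ lam.app (T.obj Y) ≫ B.map (T.μ.app Y))
    (X : C) :
    T.μ.app (B.obj (T.obj X)) ≫ lam.app (T.obj X) ≫ B.map (T.μ.app X) =
      T.map (lam.app (T.obj X) ≫ B.map (T.μ.app X)) ≫ lam.app (T.obj X) ≫ B.map (T.μ.app X) := by
  have hlam_nat : T.map (B.map (T.μ.app X)) ≫ lam.app (T.obj X) =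
      lam.app (T.obj (T.obj X)) ≫ B.map (T.map (T.μ.app X)) :=
    lam.naturality (T.μ.app X)
  rw [reassoc_of% h_mult, T.map_comp, Category.assoc, reassoc_of% hlam_nat, ← B.map_comp,
    ← B.map_comp, T.assoc]

end CategoryTheory.Monad

theorem stmt2_general {C : Type u} [Category.{v} C]
    (T : CategoryTheory.Monad C) (B : C ⥤ C)
    (lam : B ⋙ T.toFunctor ⟶ T.toFunctor ⋙ B)
    (h_mult : ∀ Y : C, T.μ.app (B.obj Y) ≫ lam.app Y =
      T.toFunctor.map (lam.app Y) ≫ lam.app (T.toFunctor.obj Y) ≫ B.map (T.μ.app Y))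
    (X : C) (p : X ⟶ B.obj (T.toFunctor.obj X)) :
    T.μ.app X ≫ (T.toFunctor.map p ≫ lam.app (T.toFunctor.obj X) ≫ B.map (T.μ.app X)) =
      T.toFunctor.map (T.toFunctor.map p ≫ lam.app (T.toFunctor.obj X) ≫ B.map (T.μ.app X)) ≫
        lam.app (T.toFunctor.obj X) ≫ B.map (T.μ.app X) :=
  T.mu_app_map_comp_eq_map_map_comp _ (T.mu_app_comp_distrib_eq_map_comp_distrib B lam h_mult X) p

/-- If `λ : TB ⇒ BT` is a distributive law of the monad `T` over the functor `B`
and `p : X ⟶ BTX` is a coalgebra, then `(TX, μ_X, p*)` with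
`p* = B(μ_X) ∘ λ_{TX} ∘ T(p)` is a `λ`-bialgebra. -/
theorem stmt2 {C : Type u} [Category.{v} C]
    (T : CategoryTheory.Monad C) (B : C ⥤ C)
    (lam : B ⋙ T.toFunctor ⟶ T.toFunctor ⋙ B)
    (h_unit : ∀ Y : C, T.η.app (B.obj Y) ≫ lam.app Y = B.map (T.η.app Y))
    (h_mult : ∀ Y : C, T.μ.app (B.obj Y) ≫ lam.app Y =
      T.toFunctor.map (lam.app Y) ≫ lam.app (T.toFunctor.obj Y) ≫ B.map (T.μ.app Y))
    (X : C) (p : X ⟶ B.obj (T.toFunctor.obj X)) :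
    T.μ.app X ≫ (T.toFunctor.map p ≫ lam.app (T.toFunctor.obj X) ≫ B.map (T.μ.app X)) =
      T.toFunctor.map (T.toFunctor.map p ≫ lam.app (T.toFunctor.obj X) ≫ B.map (T.μ.app X)) ≫
        lam.app (T.toFunctor.obj X) ≫ B.map (T.μ.app X) :=
  stmt2_general T B lam h_mult X p
end

section
/- Let λ : FB ⇒ BF be a distributive law between endofunctors F, B on a category C, and suppose a final B-coalgebra c : X → BX exists. Let h' : FX → X be the unique B-coalgebra morphism from the B-coalgebra λ_X ∘ F(c) : FX → BFX to the final coalgebra (X, c). Then (X, h', c) is the final λ-bialgebra: for every λ-bialgebra (Y, k, q) there is a unique morphism f : Y → X that is simultaneously an F-algebra morphism and a B-coalgebra morphism. -/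
/-!
A `λ`-bialgebra `(Y, k, q)` is the same as a `B`-coalgebra `(Y, q)` together with a coalgebra
morphism `k` out of the coalgebra `(F Y, λ_Y ∘ F q)` obtained by lifting `F` along `λ`; likewise
`h'` is a coalgebra morphism from the lifted final coalgebra. If `f : Y → X` is the unique
coalgebra morphism, then `f ∘ k` and `h' ∘ F f` are both coalgebra morphisms from the lifted
coalgebra on `F Y` to the final one, hence equal, which says that `f` is also an algebra morphism.
-/

open CategoryTheory

universe v u

namespace CategoryTheory.Endofunctor.Coalgebra

variable {C : Type u} [Category.{v} C] {F B : C ⥤ C}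

def liftAlong (lam : B ⋙ F ⟶ F ⋙ B) : Coalgebra B ⥤ Coalgebra B where
  obj V := ⟨F.obj V.V, F.map V.str ≫ lam.app V.V⟩
  map φ :=
    { f := F.map φ.f
      h := by
        have hnat := lam.naturality φ.f
        dsimp at hnat
        rw [Category.assoc, ← hnat, ← Category.assoc, ← F.map_comp, φ.h, F.map_comp,
          Category.assoc] }

noncomputable def isTerminalOfExistsUnique {X : C} {c : X ⟶ B.obj X}
    (h : ∀ (Y : C) (q : Y ⟶ B.obj Y), ∃! f : Y ⟶ X, f ≫ c = q ≫ B.map f) :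
    Limits.IsTerminal (⟨X, c⟩ : Coalgebra B) :=
  .ofUniqueHom (fun V => ⟨(h V.V V.str).choose, (h V.V V.str).choose_spec.1.symm⟩)
    (fun V m => Hom.ext ((h V.V V.str).choose_spec.2 m.f m.h.symm))

end CategoryTheory.Endofunctor.Coalgebra

open Endofunctor.Coalgebra in
/-- If `λ : FB ⇒ BF` is a distributive law between endofunctors and a final
`B`-coalgebra `(X, c)` exists, then `X`, equipped with the algebra `h'` induced by finality
from the coalgebra `λ_X ∘ F(c)`, is the final `λ`-bialgebra. -/
theorem stmt3 {C : Type u} [Category.{v} C]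
    (F B : C ⥤ C) (lam : B ⋙ F ⟶ F ⋙ B)
    (X : C) (c : X ⟶ B.obj X)
    (hfinal : ∀ (Y : C) (q : Y ⟶ B.obj Y), ∃! f : Y ⟶ X, f ≫ c = q ≫ B.map f)
    (h' : F.obj X ⟶ X)
    (hh' : h' ≫ c = (F.map c ≫ lam.app X) ≫ B.map h') :
    ∀ (Y : C) (k : F.obj Y ⟶ Y) (q : Y ⟶ B.obj Y),
      k ≫ q = F.map q ≫ lam.app Y ≫ B.map k →
      ∃! f : Y ⟶ X, k ≫ f = F.map f ≫ h' ∧ f ≫ c = q ≫ B.map f := by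
  intro Y k q hbi
  obtain ⟨f, hf, huniq⟩ := hfinal Y q
  refine ⟨f, ⟨?_, hf⟩, fun g hg => huniq g hg.2⟩
  let φ : (⟨Y, q⟩ : Endofunctor.Coalgebra B) ⟶ ⟨X, c⟩ := ⟨f, hf.symm⟩
  let κ : (liftAlong lam).obj ⟨Y, q⟩ ⟶ ⟨Y, q⟩ := ⟨k, (Category.assoc _ _ _).trans hbi.symm⟩
  let η : (liftAlong lam).obj ⟨X, c⟩ ⟶ ⟨X, c⟩ := ⟨h', hh'.symm⟩
  exact congrArg Hom.f
    ((isTerminalOfExistsUnique hfinal).hom_ext (κ ≫ φ) ((liftAlong lam).map φ ≫ η))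
end

section
/- The family of maps λ_X : List(P_f(X)) → P_f(List(X)) sending [S_1, …, S_n] to the set { [x_1, …, x_n] | x_i ∈ S_i for each i } is a distributive law of the list monad L over the finite powerset monad P_f on Set: it is natural in X and compatible with the units and multiplications of both monads. -/
/-!
Membership in `λ_X [S₁, …, Sₙ]` is the relation `Forall₂ (∈)` between a list and the list of
sets. Each law then reduces to how `Forall₂` interacts with `map`, `[·]` and `flatten`, together
with `Forall₂ (R ∘r S) = Forall₂ R ∘r Forall₂ S`: membership in `S.image f` is the composite of
the graph of `f` with `∈`, and membership in a union `⋃ T` is the composite of `∈` with `∈`.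
-/

universe u

section

local infixr:80 " ∘r " => Relation.Comp

namespace List

variable {α β γ : Type*} {R : α → β → Prop}

theorem forall₂_comp {S : β → γ → Prop} : Forall₂ (R ∘r S) = Forall₂ R ∘r Forall₂ S := by
  ext l₁ l₃
  induction l₁ generalizing l₃ with
  | nil => simp [Relation.Comp, forall₂_nil_left_iff]
  | cons a l₁ ih =>
    simp only [Relation.Comp, forall₂_cons_left_iff] at ih ⊢
    constructor
    · rintro ⟨c, l₃, ⟨b, hab, hbc⟩, hl, rfl⟩
      obtain ⟨l₂, h₁, h₂⟩ := (ih l₃).1 hl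
      exact ⟨b :: l₂, ⟨b, l₂, hab, h₁, rfl⟩, .cons hbc h₂⟩
    · rintro ⟨_, ⟨b, l₂, hab, h₁, rfl⟩, _ | ⟨hbc, h₂⟩⟩
      exact ⟨_, _, ⟨b, hab, hbc⟩, (ih _).2 ⟨l₂, h₁, h₂⟩, rfl⟩

theorem forall₂_eq_map_iff {f : β → α} {l : List α} {l' : List β} :
    Forall₂ (fun a b => a = f b) l l' ↔ map f l' = l := by
  rw [← forall₂_map_right_iff, forall₂_eq_eq_eq, eq_comm]

theorem forall₂_singleton_right_iff {l : List α} {b : β} :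
    Forall₂ R l [b] ↔ ∃ a, R a b ∧ l = [a] := by
  simp [forall₂_cons_right_iff, forall₂_nil_right_iff]

theorem forall₂_append_right_iff {l : List α} {l₁ l₂ : List β} :
    Forall₂ R l (l₁ ++ l₂) ↔ ∃ k₁ k₂, Forall₂ R k₁ l₁ ∧ Forall₂ R k₂ l₂ ∧ l = k₁ ++ k₂ := by
  constructor
  · intro h
    exact ⟨_, _, forall₂_take_append l l₁ l₂ h, forall₂_drop_append l l₁ l₂ h,
      (take_append_drop _ l).symm⟩
  · rintro ⟨k₁, k₂, h₁, h₂, rfl⟩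
    exact rel_append h₁ h₂

theorem forall₂_flatten_right_iff {l : List α} {ll : List (List β)} :
    Forall₂ R l ll.flatten ↔ ∃ ls, Forall₂ (Forall₂ R) ls ll ∧ ls.flatten = l := by
  induction ll generalizing l with
  | nil => simp [forall₂_nil_right_iff, eq_comm]
  | cons l₁ ll ih =>
    simp only [flatten_cons, forall₂_append_right_iff, ih, forall₂_cons_right_iff]
    constructor
    · rintro ⟨k, _, hk, ⟨ls, hls, rfl⟩, rfl⟩
      exact ⟨k :: ls, ⟨k, ls, hk, hls, rfl⟩, rfl⟩
    · rintro ⟨_, ⟨k, ls, hk, hls, rfl⟩, rfl⟩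
      exact ⟨k, _, hk, ⟨ls, hls, rfl⟩, rfl⟩

end List

namespace Finset

variable {α β : Type*}

theorem mem_image_eq_comp [DecidableEq β] (f : α → β) :
    (fun b (s : Finset α) => b ∈ s.image f) = (fun b a => b = f a) ∘r (· ∈ ·) := by
  ext b s
  simp [Relation.Comp, and_comm, eq_comm]

theorem mem_biUnion_id_eq_comp [DecidableEq α] :
    (fun a (T : Finset (Finset α)) => a ∈ T.biUnion id) = (· ∈ ·) ∘r (· ∈ ·) := by
  ext a T
  simp [Relation.Comp, and_comm]

end Finset

end

/-- the family `λ_X : List (P_f X) → P_f (List X)` sending `[S₁, …, Sₙ]` to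
`{ [x₁, …, xₙ] | xᵢ ∈ Sᵢ }` is a distributive law of the list monad over the finite powerset
monad: it is natural and compatible with the units and multiplications of both monads. -/
theorem stmt4
    (lam : ∀ (X : Type u) [DecidableEq X], List (Finset X) → Finset (List X))
    (hlam : ∀ (X : Type u) [DecidableEq X] (Ss : List (Finset X)) (l : List X),
      l ∈ lam X Ss ↔ List.Forall₂ (fun x S => x ∈ S) l Ss) :
    -- naturality
    (∀ (X Y : Type u) [DecidableEq X] [DecidableEq Y] (f : X → Y) (Ss : List (Finset X)),
      lam Y (Ss.map (Finset.image f)) = (lam X Ss).image (List.map f)) ∧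
    -- compatibility with the unit of the list monad
    (∀ (X : Type u) [DecidableEq X] (S : Finset X),
      lam X [S] = S.image (fun x => [x])) ∧
    -- compatibility with the multiplication (flattening) of the list monad
    (∀ (X : Type u) [DecidableEq X] (ll : List (List (Finset X))),
      lam X ll.flatten = (lam (List X) (ll.map (lam X))).image List.flatten) ∧
    -- compatibility with the unit of the finite powerset monad
    (∀ (X : Type u) [DecidableEq X] (l : List X),
      lam X (l.map (fun x => ({x} : Finset X))) = {l}) ∧
    -- compatibility with the multiplication (union) of the finite powerset monad
    (∀ (X : Type u) [DecidableEq X] (Sss : List (Finset (Finset X))),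
      lam X (Sss.map (fun T => T.biUnion id)) =
        ((lam (Finset X) Sss).image (lam X)).biUnion id) := by
  refine ⟨fun X Y _ _ f Ss => ?_, fun X _ S => ?_, fun X _ ll => ?_, fun X _ l => ?_,
    fun X _ Sss => ?_⟩
  · ext l
    simp only [hlam, List.forall₂_map_right_iff, Finset.mem_image_eq_comp, List.forall₂_comp]
    simp [Relation.Comp, List.forall₂_eq_map_iff, hlam, and_comm]
  · ext l
    simp [hlam, List.forall₂_singleton_right_iff, eq_comm]
  · ext l
    simp only [hlam, List.forall₂_flatten_right_iff, Finset.mem_image, List.forall₂_map_right_iff]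
  · ext l
    simp [hlam, List.forall₂_map_right_iff]
  · ext l
    simp only [hlam, List.forall₂_map_right_iff, Finset.mem_biUnion_id_eq_comp, List.forall₂_comp]
    simp [Relation.Comp, hlam, and_comm]
end

section
/- Let U : C → D and K : D → C be functors with U left adjoint to K. Let T' : C → C and T'' : D → D be monads such that U ∘ T' = T'' ∘ U (including compatibility of units and multiplications, i.e., the adjunction's left adjoint lifts the monad). Then the family λ_X := ((T''((id_{KUX})^♭))^♯ : T'(KU X) → KU(T' X), where (·)^♭ : C[X, KZ] → D[UX, Z] and (·)^♯ : D[UX, Z] → C[X, KZ] are the bijections of the adjunction, is a distributive law of the monad T' over the monad KU (the monad induced by the adjunction). -/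
/-!
Under the adjunction `U ⊣ K`, the component `λ_X` is the transpose of
`φ_X : U T' K U X ≅ T'' U K U X ⟶ T'' U X ≅ U T' X`, i.e. of `T''` applied to the counit
at `U X`.
Transposed, each axiom of a distributive law becomes an identity in `D` between composites of
`T''`, the counit and the lifting isomorphism `U T' ≅ T'' U`, which follows from naturality of the
counit, the triangle identity, and the compatibility of the lift with units and multiplications.
-/

open CategoryTheory

universe v₁ v₂ u₁ u₂

namespace CategoryTheory.Adjunction

variable {C : Type u₁} [Category.{v₁} C] {D : Type u₂} [Category.{v₂} D]
  {U : C ⥤ D} {K : D ⥤ C} (adj : U ⊣ K)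

section Functors

variable {F : C ⥤ C} {G : D ⥤ D} (e : F ⋙ U ≅ U ⋙ G)

lemma map_map_comp_hom_app {X Y : C} (f : X ⟶ Y) :
    U.map (F.map f) ≫ e.hom.app Y = e.hom.app X ≫ G.map (U.map f) :=
  e.hom.naturality f

lemma inv_app_comp_map_map {X Y : C} (f : X ⟶ Y) :
    e.inv.app X ≫ U.map (F.map f) = G.map (U.map f) ≫ e.inv.app Y :=
  (e.inv.naturality f).symm

def liftedCounit (X : C) : U.obj (F.obj (K.obj (U.obj X))) ⟶ U.obj (F.obj X) :=
  e.hom.app _ ≫ G.map (adj.counit.app (U.obj X)) ≫ e.inv.app X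

def distribOfLift (X : C) : F.obj (K.obj (U.obj X)) ⟶ K.obj (U.obj (F.obj X)) :=
  adj.homEquiv _ _ (adj.liftedCounit e X)

lemma map_distribOfLift_comp_counit (X : C) :
    U.map (adj.distribOfLift e X) ≫ adj.counit.app _ = adj.liftedCounit e X :=
  (adj.homEquiv_counit _ _ _).symm.trans (Equiv.symm_apply_apply _ _)

lemma distribOfLift_naturality {X Y : C} (f : X ⟶ Y) :
    F.map (K.map (U.map f)) ≫ adj.distribOfLift e Y =
      adj.distribOfLift e X ≫ K.map (U.map (F.map f)) := by
  apply (adj.homEquiv _ _).symm.injective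
  simp only [homEquiv_counit, Functor.map_comp, Category.assoc, map_distribOfLift_comp_counit,
    reassoc_of% (map_distribOfLift_comp_counit adj e), liftedCounit, Functor.comp_obj,
    Functor.id_obj, reassoc_of% (map_map_comp_hom_app e), counit_naturality, inv_app_comp_map_map,
    NatIso.cancel_natIso_hom_left]
  rw [← G.map_comp_assoc, ← G.map_comp_assoc, adj.counit_naturality]

lemma map_unit_comp_distribOfLift (X : C) :
    F.map (adj.unit.app X) ≫ adj.distribOfLift e X = adj.unit.app (F.obj X) := by
  apply (adj.homEquiv _ _).symm.injective
  simp only [Functor.id_obj, Functor.comp_obj, homEquiv_counit, Functor.map_comp,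
    Category.assoc, map_distribOfLift_comp_counit, liftedCounit,
    reassoc_of% (map_map_comp_hom_app e), left_triangle_components]
  rw [← G.map_comp_assoc, adj.left_triangle_components, G.map_id, Category.id_comp,
    e.hom_inv_id_app]
  rfl

lemma map_map_counit_comp_distribOfLift (X : C) :
    F.map (K.map (adj.counit.app (U.obj X))) ≫ adj.distribOfLift e X =
      adj.distribOfLift e (K.obj (U.obj X)) ≫ K.map (U.map (adj.distribOfLift e X)) ≫
        K.map (adj.counit.app (U.obj (F.obj X))) := by
  apply (adj.homEquiv _ _).symm.injective
  simp only [Functor.comp_obj, Functor.id_obj, homEquiv_counit, Functor.map_comp,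
    Category.assoc, map_distribOfLift_comp_counit,
    reassoc_of% (map_distribOfLift_comp_counit adj e), liftedCounit,
    reassoc_of% (map_map_comp_hom_app e), counit_naturality, counit_naturality_assoc,
    Iso.inv_hom_id_app_assoc, NatIso.cancel_natIso_hom_left]
  rw [← G.map_comp_assoc, adj.counit_naturality, G.map_comp_assoc]

end Functors

section Monads

variable {T' : Monad C} {T'' : Monad D} (e : T'.toFunctor ⋙ U ≅ U ⋙ T''.toFunctor)

lemma η_comp_distribOfLift
    (hη : ∀ X, U.map (T'.η.app X) ≫ e.hom.app X = T''.η.app (U.obj X)) (X : C) :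
    T'.η.app (K.obj (U.obj X)) ≫ adj.distribOfLift e X = K.map (U.map (T'.η.app X)) := by
  apply (adj.homEquiv _ _).symm.injective
  rw [← cancel_mono (e.hom.app X)]
  simp only [Functor.id_obj, Functor.comp_obj, homEquiv_counit, Functor.map_comp,
    Category.assoc, map_distribOfLift_comp_counit, liftedCounit, reassoc_of% hη,
    Iso.inv_hom_id_app, Category.comp_id, counit_naturality, hη]
  exact (T''.η.naturality _).symm

lemma μ_comp_distribOfLift
    (hμ : ∀ X, U.map (T'.μ.app X) ≫ e.hom.app X =
      e.hom.app (T'.obj X) ≫ T''.map (e.hom.app X) ≫ T''.μ.app (U.obj X)) (X : C) :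
    T'.μ.app (K.obj (U.obj X)) ≫ adj.distribOfLift e X =
      T'.map (adj.distribOfLift e X) ≫ adj.distribOfLift e (T'.obj X) ≫
        K.map (U.map (T'.μ.app X)) := by
  apply (adj.homEquiv _ _).symm.injective
  rw [← cancel_mono (e.hom.app X)]
  simp only [Functor.comp_obj, Functor.id_obj, homEquiv_counit, Functor.map_comp,
    Category.assoc, map_distribOfLift_comp_counit,
    reassoc_of% (map_distribOfLift_comp_counit adj e), liftedCounit, reassoc_of% hμ, hμ,
    Iso.inv_hom_id_app, Iso.inv_hom_id_app_assoc,
    Category.comp_id, counit_naturality, reassoc_of% (map_map_comp_hom_app e),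
    NatIso.cancel_natIso_hom_left]
  rw [← T''.μ.naturality, Functor.comp_map]
  simp only [← T''.map_comp_assoc, Category.assoc,
    reassoc_of% (map_distribOfLift_comp_counit adj e), liftedCounit, Iso.inv_hom_id_app]
  simp

end Monads

lemma distribOfLift_eqToIso {F : C ⥤ C} {G : D ⥤ D} (h : F ⋙ U = U ⋙ G)
    (hobj : ∀ X, U.obj (F.obj X) = G.obj (U.obj X)) (X : C) :
    adj.distribOfLift (eqToIso h) X =
      adj.homEquiv _ _ (eqToHom (hobj (K.obj (U.obj X))) ≫
        G.map ((adj.homEquiv _ _).symm (𝟙 (K.obj (U.obj X)))) ≫ eqToHom (hobj X).symm) := by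
  simp [distribOfLift, liftedCounit, eqToHom_app, homEquiv_counit]

end CategoryTheory.Adjunction

/-- if `U ⊣ K` and the monad `T'` on `C` is lifted by `U` to a monad `T''` on `D`
(i.e. `U ∘ T' = T'' ∘ U`, compatibly with units and multiplications), then the family
`λ_X = ((T''((id_{KUX})^♭))^♯ : T'(KUX) ⟶ KU(T'X)` is a distributive law of the monad `T'`
over the monad `KU` induced by the adjunction. -/
theorem stmt6 {C : Type u₁} [Category.{v₁} C] {D : Type u₂} [Category.{v₂} D]
    (U : C ⥤ D) (K : D ⥤ C) (adj : U ⊣ K)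
    (T' : CategoryTheory.Monad C) (T'' : CategoryTheory.Monad D)
    (hfun : T'.toFunctor ⋙ U = U ⋙ T''.toFunctor)
    (hobj : ∀ X : C, U.obj (T'.toFunctor.obj X) = T''.toFunctor.obj (U.obj X))
    (hη : ∀ X : C, U.map (T'.η.app X) = T''.η.app (U.obj X) ≫ eqToHom (hobj X).symm)
    (hμ : ∀ X : C, U.map (T'.μ.app X) =
      eqToHom ((hobj (T'.toFunctor.obj X)).trans (congrArg T''.toFunctor.obj (hobj X))) ≫
        T''.μ.app (U.obj X) ≫ eqToHom (hobj X).symm) :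
    let lam : ∀ X : C, T'.toFunctor.obj (K.obj (U.obj X)) ⟶ K.obj (U.obj (T'.toFunctor.obj X)) :=
      fun X => (adj.homEquiv (T'.toFunctor.obj (K.obj (U.obj X))) (U.obj (T'.toFunctor.obj X)))
        (eqToHom (hobj (K.obj (U.obj X))) ≫
          T''.toFunctor.map ((adj.homEquiv (K.obj (U.obj X)) (U.obj X)).symm
            (𝟙 (K.obj (U.obj X)))) ≫ eqToHom (hobj X).symm)
    -- λ is natural
    (∀ (X Y : C) (f : X ⟶ Y),
      T'.toFunctor.map (K.map (U.map f)) ≫ lam Y = lam X ≫ K.map (U.map (T'.toFunctor.map f))) ∧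
    -- λ is compatible with the unit of the monad KU
    (∀ X : C, T'.toFunctor.map (adj.unit.app X) ≫ lam X = adj.unit.app (T'.toFunctor.obj X)) ∧
    -- λ is compatible with the multiplication of the monad KU
    (∀ X : C, T'.toFunctor.map (K.map (adj.counit.app (U.obj X))) ≫ lam X =
      lam (K.obj (U.obj X)) ≫ K.map (U.map (lam X)) ≫
        K.map (adj.counit.app (U.obj (T'.toFunctor.obj X)))) ∧
    -- λ is compatible with the unit of the monad T'
    (∀ X : C, T'.η.app (K.obj (U.obj X)) ≫ lam X = K.map (U.map (T'.η.app X))) ∧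
    -- λ is compatible with the multiplication of the monad T'
    (∀ X : C, T'.μ.app (K.obj (U.obj X)) ≫ lam X =
      T'.toFunctor.map (lam X) ≫ lam (T'.toFunctor.obj X) ≫ K.map (U.map (T'.μ.app X))) := by
  intro lam
  have hlam : ∀ X, lam X = adj.distribOfLift (eqToIso hfun) X := fun X =>
    (adj.distribOfLift_eqToIso hfun hobj X).symm
  have hη' : ∀ X, U.map (T'.η.app X) ≫ (eqToIso hfun).hom.app X = T''.η.app (U.obj X) := by
    simp [hη, eqToHom_app]
  have hμ' : ∀ X, U.map (T'.μ.app X) ≫ (eqToIso hfun).hom.app X =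
      (eqToIso hfun).hom.app (T'.obj X) ≫ T''.map ((eqToIso hfun).hom.app X) ≫
        T''.μ.app (U.obj X) := by
    simp [hμ, eqToHom_app, eqToHom_map]
  simp only [hlam]
  exact ⟨fun _ _ f => adj.distribOfLift_naturality _ f, adj.map_unit_comp_distribOfLift _,
    adj.map_map_counit_comp_distribOfLift _, adj.η_comp_distribOfLift _ hη',
    adj.μ_comp_distribOfLift _ hμ'⟩
end

section
/- Let U ⊣ K be an adjunction with counit ε, and let T be a monad on the domain of U such that U commutes with T as in the lifting situation, with induced distributive laws φ : L(KU) ⇒ (KU)L and ψ : P(KU) ⇒ (KU)P, and a distributive law λ : LP ⇒ PL of the monad L over the monad P. If the Yang–Baxter equation holds, i.e., (KU)λ ∘ φP ∘ Lψ = ψL ∘ Pφ ∘ λ(KU) as natural transformations LP(KU) ⇒ (KU)PL, then the composite δ := (KU)λ ∘ φ_P : L(KU P) ⇒ (KU P)L is a distributive law of the monad L over the composite monad KU∘P. -/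
open CategoryTheory Functor

universe v₁ v₂ u₁ u₂

/-!
Write `T = KU` and `δ = Tλ ∘ φP`; recall that `F ⋙ G` is the composite `GF`, so
`φ : T ⋙ L ⟶ L ⋙ T` is a transformation `LT ⇒ TL`. The two laws of `δ` for the unit and
multiplication of `L` only combine the corresponding laws of `φ` and `λ` (with naturality of `φ`
in between), and the unit law for `TP` likewise uses the unit laws of `φ` and `λ`. The
multiplication of `TP` is `Tμᴾ ∘ μᵀP² ∘ TψP`: the multiplication laws of `φ` and `λ` move
`L(Tμᴾ)` and `L(μᵀ)` across `δ`, leaving `T(Tλ ∘ φP ∘ Lψ)`, which the Yang–Baxter equation turns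
into `T(ψL ∘ Pφ ∘ λT)`; naturality of `ψ` and `μᵀ` then gives the right-hand side.
-/

section

variable {C : Type u₁} [Category.{v₁} C]

def iteratedDistLaw {F G H : C ⥤ C} (φ : G ⋙ F ⟶ F ⋙ G) (lam : H ⋙ F ⟶ F ⋙ H) :
    (H ⋙ G) ⋙ F ⟶ F ⋙ H ⋙ G :=
  whiskerLeft H φ ≫ whiskerRight lam G

@[simp]
lemma iteratedDistLaw_app {F G H : C ⥤ C} (φ : G ⋙ F ⟶ F ⋙ G) (lam : H ⋙ F ⟶ F ⋙ H) (X : C) :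
    (iteratedDistLaw φ lam).app X = φ.app (H.obj X) ≫ G.map (lam.app X) := rfl

def compμ {P T : Monad C} (ψ : T.toFunctor ⋙ P.toFunctor ⟶ P.toFunctor ⋙ T.toFunctor) :
    (P.toFunctor ⋙ T.toFunctor) ⋙ P.toFunctor ⋙ T.toFunctor ⟶ P.toFunctor ⋙ T.toFunctor :=
  whiskerLeft P.toFunctor (whiskerRight ψ T.toFunctor) ≫
    whiskerLeft (P.toFunctor ⋙ P.toFunctor) T.μ ≫ whiskerRight P.μ T.toFunctor

@[simp]
lemma compμ_app {P T : Monad C}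
    (ψ : T.toFunctor ⋙ P.toFunctor ⟶ P.toFunctor ⋙ T.toFunctor) (X : C) :
    (compμ ψ).app X =
      T.map (ψ.app (P.obj X)) ≫ T.μ.app (P.obj (P.obj X)) ≫ T.map (P.μ.app X) := rfl

section LeftLaws
variable {L : Monad C} {G H : C ⥤ C} (φ : G ⋙ L.toFunctor ⟶ L.toFunctor ⋙ G)
  (lam : H ⋙ L.toFunctor ⟶ L.toFunctor ⋙ H)

lemma iteratedDistLaw_η
    (hφ : ∀ X, L.η.app (G.obj X) ≫ φ.app X = G.map (L.η.app X))
    (hlam : ∀ X, L.η.app (H.obj X) ≫ lam.app X = H.map (L.η.app X)) (X : C) :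
    L.η.app (G.obj (H.obj X)) ≫ (iteratedDistLaw φ lam).app X = G.map (H.map (L.η.app X)) := by
  rw [iteratedDistLaw_app, reassoc_of% hφ, ← G.map_comp, hlam]

lemma iteratedDistLaw_μ
    (hφ : ∀ X, L.μ.app (G.obj X) ≫ φ.app X =
      L.map (φ.app X) ≫ φ.app (L.obj X) ≫ G.map (L.μ.app X))
    (hlam : ∀ X, L.μ.app (H.obj X) ≫ lam.app X =
      L.map (lam.app X) ≫ lam.app (L.obj X) ≫ H.map (L.μ.app X)) (X : C) :
    L.μ.app (G.obj (H.obj X)) ≫ (iteratedDistLaw φ lam).app X =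
      L.map ((iteratedDistLaw φ lam).app X) ≫ (iteratedDistLaw φ lam).app (L.obj X) ≫
        G.map (H.map (L.μ.app X)) := by
  have φ_nat := φ.naturality (lam.app X)
  simp only [Functor.comp_map] at φ_nat
  simp only [iteratedDistLaw_app, L.map_comp, Category.assoc, reassoc_of% φ_nat]
  rw [reassoc_of% hφ, ← G.map_comp, hlam, G.map_comp, G.map_comp]

end LeftLaws

section RightLaws
variable {L : C ⥤ C} {P T : Monad C} (φ : T.toFunctor ⋙ L ⟶ L ⋙ T.toFunctor)
  (lam : P.toFunctor ⋙ L ⟶ L ⋙ P.toFunctor)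

lemma iteratedDistLaw_compη
    (hφ : ∀ X, L.map (T.η.app X) ≫ φ.app X = T.η.app (L.obj X))
    (hlam : ∀ X, L.map (P.η.app X) ≫ lam.app X = P.η.app (L.obj X)) (X : C) :
    L.map (P.η.app X ≫ T.η.app (P.obj X)) ≫ (iteratedDistLaw φ lam).app X =
      P.η.app (L.obj X) ≫ T.η.app (P.obj (L.obj X)) := by
  have η_nat := T.η.naturality (lam.app X)
  simp only [Functor.id_map, Functor.comp_obj] at η_nat
  rw [iteratedDistLaw_app, L.map_comp, Category.assoc, reassoc_of% hφ, ← η_nat,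
    ← Category.assoc, hlam]

lemma iteratedDistLaw_compμ (ψ : T.toFunctor ⋙ P.toFunctor ⟶ P.toFunctor ⋙ T.toFunctor)
    (hφ : ∀ X, L.map (T.μ.app X) ≫ φ.app X =
      φ.app (T.obj X) ≫ T.map (φ.app X) ≫ T.μ.app (L.obj X))
    (hlam : ∀ X, L.map (P.μ.app X) ≫ lam.app X =
      lam.app (P.obj X) ≫ P.map (lam.app X) ≫ P.μ.app (L.obj X))
    (hYB : ∀ X, L.map (ψ.app X) ≫ φ.app (P.obj X) ≫ T.map (lam.app X) =
      lam.app (T.obj X) ≫ P.map (φ.app X) ≫ ψ.app (L.obj X)) (X : C) :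
    L.map ((compμ ψ).app X) ≫ (iteratedDistLaw φ lam).app X =
      (iteratedDistLaw φ lam).app (T.obj (P.obj X)) ≫
        T.map (P.map ((iteratedDistLaw φ lam).app X)) ≫ (compμ ψ).app (L.obj X) := by
  have φ_nat {Y Z : C} (f : Y ⟶ Z) : L.map (T.map f) ≫ φ.app Z = φ.app Y ≫ T.map (L.map f) :=
    φ.naturality f
  have μ_nat {Y Z : C} (f : Y ⟶ Z) : T.μ.app Y ≫ T.map f = T.map (T.map f) ≫ T.μ.app Z :=
    (T.μ.naturality f).symm
  simp only [compμ_app, iteratedDistLaw_app, Functor.comp_obj, Functor.map_comp, Category.assoc]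
  calc L.map (T.map (ψ.app (P.obj X))) ≫ L.map (T.μ.app (P.obj (P.obj X))) ≫
        L.map (T.map (P.μ.app X)) ≫ φ.app (P.obj X) ≫ T.map (lam.app X)
      = L.map (T.map (ψ.app (P.obj X))) ≫ L.map (T.μ.app (P.obj (P.obj X))) ≫
          φ.app (P.obj (P.obj X)) ≫ T.map (L.map (P.μ.app X) ≫ lam.app X) := by
        rw [reassoc_of% φ_nat, T.map_comp]
    _ = L.map (T.map (ψ.app (P.obj X))) ≫ φ.app (T.obj (P.obj (P.obj X))) ≫
          T.map (φ.app (P.obj (P.obj X))) ≫ T.μ.app (L.obj (P.obj (P.obj X))) ≫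
          T.map (lam.app (P.obj X) ≫ P.map (lam.app X) ≫ P.μ.app (L.obj X)) := by
        rw [reassoc_of% hφ, hlam]
    _ = φ.app (P.obj (T.obj (P.obj X))) ≫
          T.map (L.map (ψ.app (P.obj X)) ≫ φ.app (P.obj (P.obj X)) ≫ T.map (lam.app (P.obj X))) ≫
          T.μ.app (P.obj (L.obj (P.obj X))) ≫ T.map (P.map (lam.app X) ≫ P.μ.app (L.obj X)) := by
        simp only [Functor.comp_obj, Functor.map_comp, Category.assoc, reassoc_of% φ_nat,
          reassoc_of% μ_nat]
    _ = φ.app (P.obj (T.obj (P.obj X))) ≫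
          T.map (lam.app (T.obj (P.obj X)) ≫ P.map (φ.app (P.obj X)) ≫ ψ.app (L.obj (P.obj X))) ≫
          T.μ.app (P.obj (L.obj (P.obj X))) ≫ T.map (P.map (lam.app X) ≫ P.μ.app (L.obj X)) := by
        rw [hYB]
    _ = _ := by
        have ψ_nat := T.congr_map (ψ.naturality (lam.app X))
        simp only [Functor.comp_obj, Functor.comp_map, Functor.map_comp] at ψ_nat
        simp only [Functor.comp_obj, Functor.map_comp, Category.assoc, reassoc_of% μ_nat,
          reassoc_of% ψ_nat]

end RightLaws

end

theorem stmt8_general {C : Type u₁} [Category.{v₁} C] {D : Type u₂} [Category.{v₂} D]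
    (U : C ⥤ D) (K : D ⥤ C) (adj : U ⊣ K)
    (L P : CategoryTheory.Monad C)
    (φ : (U ⋙ K) ⋙ L.toFunctor ⟶ L.toFunctor ⋙ (U ⋙ K))
    (ψ : (U ⋙ K) ⋙ P.toFunctor ⟶ P.toFunctor ⋙ (U ⋙ K))
    (lam : P.toFunctor ⋙ L.toFunctor ⟶ L.toFunctor ⋙ P.toFunctor)
    -- φ is a distributive law of the monad L over the monad KU
    (hφ1 : ∀ X : C, L.toFunctor.map (adj.unit.app X) ≫ φ.app X = adj.unit.app (L.toFunctor.obj X))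
    (hφ2 : ∀ X : C, L.toFunctor.map (K.map (adj.counit.app (U.obj X))) ≫ φ.app X =
      φ.app (K.obj (U.obj X)) ≫ K.map (U.map (φ.app X)) ≫
        K.map (adj.counit.app (U.obj (L.toFunctor.obj X))))
    (hφ3 : ∀ X : C, L.η.app (K.obj (U.obj X)) ≫ φ.app X = K.map (U.map (L.η.app X)))
    (hφ4 : ∀ X : C, L.μ.app (K.obj (U.obj X)) ≫ φ.app X =
      L.toFunctor.map (φ.app X) ≫ φ.app (L.toFunctor.obj X) ≫ K.map (U.map (L.μ.app X)))
    -- λ is a distributive law of the monad L over the monad P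
    (hlam1 : ∀ X : C, L.toFunctor.map (P.η.app X) ≫ lam.app X = P.η.app (L.toFunctor.obj X))
    (hlam2 : ∀ X : C, L.toFunctor.map (P.μ.app X) ≫ lam.app X =
      lam.app (P.toFunctor.obj X) ≫ P.toFunctor.map (lam.app X) ≫ P.μ.app (L.toFunctor.obj X))
    (hlam3 : ∀ X : C, L.η.app (P.toFunctor.obj X) ≫ lam.app X = P.toFunctor.map (L.η.app X))
    (hlam4 : ∀ X : C, L.μ.app (P.toFunctor.obj X) ≫ lam.app X =
      L.toFunctor.map (lam.app X) ≫ lam.app (L.toFunctor.obj X) ≫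
        P.toFunctor.map (L.μ.app X))
    -- the Yang–Baxter equation
    (hYB : ∀ X : C, L.toFunctor.map (ψ.app X) ≫ φ.app (P.toFunctor.obj X) ≫
        K.map (U.map (lam.app X)) =
      lam.app (K.obj (U.obj X)) ≫ P.toFunctor.map (φ.app X) ≫ ψ.app (L.toFunctor.obj X)) :
    -- then δ := (KU)λ ∘ φP is a distributive law of the monad L over the composite monad KU∘P
    let δ : ∀ X : C, L.toFunctor.obj (K.obj (U.obj (P.toFunctor.obj X))) ⟶
        K.obj (U.obj (P.toFunctor.obj (L.toFunctor.obj X))) :=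
      fun X => φ.app (P.toFunctor.obj X) ≫ K.map (U.map (lam.app X))
    let μMP : ∀ Z : C, K.obj (U.obj (P.toFunctor.obj (K.obj (U.obj (P.toFunctor.obj Z))))) ⟶
        K.obj (U.obj (P.toFunctor.obj Z)) :=
      fun Z => K.map (U.map (ψ.app (P.toFunctor.obj Z))) ≫
        K.map (adj.counit.app (U.obj (P.toFunctor.obj (P.toFunctor.obj Z)))) ≫
        K.map (U.map (P.μ.app Z))
    -- δ is natural
    (∀ (X Y : C) (f : X ⟶ Y),
      L.toFunctor.map (K.map (U.map (P.toFunctor.map f))) ≫ δ Y =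
        δ X ≫ K.map (U.map (P.toFunctor.map (L.toFunctor.map f)))) ∧
    -- δ is compatible with the unit of KU∘P
    (∀ X : C, L.toFunctor.map (P.η.app X ≫ adj.unit.app (P.toFunctor.obj X)) ≫ δ X =
      P.η.app (L.toFunctor.obj X) ≫ adj.unit.app (P.toFunctor.obj (L.toFunctor.obj X))) ∧
    -- δ is compatible with the multiplication of KU∘P
    (∀ X : C, L.toFunctor.map (μMP X) ≫ δ X =
      δ (K.obj (U.obj (P.toFunctor.obj X))) ≫ K.map (U.map (P.toFunctor.map (δ X))) ≫
        μMP (L.toFunctor.obj X)) ∧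
    -- δ is compatible with the unit of L
    (∀ X : C, L.η.app (K.obj (U.obj (P.toFunctor.obj X))) ≫ δ X =
      K.map (U.map (P.toFunctor.map (L.η.app X)))) ∧
    -- δ is compatible with the multiplication of L
    (∀ X : C, L.μ.app (K.obj (U.obj (P.toFunctor.obj X))) ≫ δ X =
      L.toFunctor.map (δ X) ≫ δ (L.toFunctor.obj X) ≫
        K.map (U.map (P.toFunctor.map (L.μ.app X)))) := by
  intro δ μMP
  exact ⟨fun _ _ f => (iteratedDistLaw φ lam).naturality f,
    iteratedDistLaw_compη (T := adj.toMonad) φ lam hφ1 hlam1,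
    iteratedDistLaw_compμ (T := adj.toMonad) φ lam ψ hφ2 hlam2 hYB,
    iteratedDistLaw_η φ lam hφ3 hlam3,
    iteratedDistLaw_μ φ lam hφ4 hlam4⟩

/-- an instance of Cheng's iterated distributive laws: given monads `L`, `P`
on `C`, the monad `KU` induced by an adjunction `U ⊣ K`, distributive laws
`φ : L(KU) ⇒ (KU)L`, `ψ : P(KU) ⇒ (KU)P` and `λ : LP ⇒ PL` of monads satisfying the
Yang–Baxter equation, the composite `δ := (KU)λ ∘ φP : L(KU∘P) ⇒ (KU∘P)L` is a distributive
law of the monad `L` over the composite monad `KU∘P`. -/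
theorem stmt8 {C : Type u₁} [Category.{v₁} C] {D : Type u₂} [Category.{v₂} D]
    (U : C ⥤ D) (K : D ⥤ C) (adj : U ⊣ K)
    (L P : CategoryTheory.Monad C)
    (φ : (U ⋙ K) ⋙ L.toFunctor ⟶ L.toFunctor ⋙ (U ⋙ K))
    (ψ : (U ⋙ K) ⋙ P.toFunctor ⟶ P.toFunctor ⋙ (U ⋙ K))
    (lam : P.toFunctor ⋙ L.toFunctor ⟶ L.toFunctor ⋙ P.toFunctor)
    -- φ is a distributive law of the monad L over the monad KU
    (hφ1 : ∀ X : C, L.toFunctor.map (adj.unit.app X) ≫ φ.app X = adj.unit.app (L.toFunctor.obj X))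
    (hφ2 : ∀ X : C, L.toFunctor.map (K.map (adj.counit.app (U.obj X))) ≫ φ.app X =
      φ.app (K.obj (U.obj X)) ≫ K.map (U.map (φ.app X)) ≫
        K.map (adj.counit.app (U.obj (L.toFunctor.obj X))))
    (hφ3 : ∀ X : C, L.η.app (K.obj (U.obj X)) ≫ φ.app X = K.map (U.map (L.η.app X)))
    (hφ4 : ∀ X : C, L.μ.app (K.obj (U.obj X)) ≫ φ.app X =
      L.toFunctor.map (φ.app X) ≫ φ.app (L.toFunctor.obj X) ≫ K.map (U.map (L.μ.app X)))
    -- ψ is a distributive law of the monad P over the monad KU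
    (hψ1 : ∀ X : C, P.toFunctor.map (adj.unit.app X) ≫ ψ.app X = adj.unit.app (P.toFunctor.obj X))
    (hψ2 : ∀ X : C, P.toFunctor.map (K.map (adj.counit.app (U.obj X))) ≫ ψ.app X =
      ψ.app (K.obj (U.obj X)) ≫ K.map (U.map (ψ.app X)) ≫
        K.map (adj.counit.app (U.obj (P.toFunctor.obj X))))
    (hψ3 : ∀ X : C, P.η.app (K.obj (U.obj X)) ≫ ψ.app X = K.map (U.map (P.η.app X)))
    (hψ4 : ∀ X : C, P.μ.app (K.obj (U.obj X)) ≫ ψ.app X =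
      P.toFunctor.map (ψ.app X) ≫ ψ.app (P.toFunctor.obj X) ≫ K.map (U.map (P.μ.app X)))
    -- λ is a distributive law of the monad L over the monad P
    (hlam1 : ∀ X : C, L.toFunctor.map (P.η.app X) ≫ lam.app X = P.η.app (L.toFunctor.obj X))
    (hlam2 : ∀ X : C, L.toFunctor.map (P.μ.app X) ≫ lam.app X =
      lam.app (P.toFunctor.obj X) ≫ P.toFunctor.map (lam.app X) ≫ P.μ.app (L.toFunctor.obj X))
    (hlam3 : ∀ X : C, L.η.app (P.toFunctor.obj X) ≫ lam.app X = P.toFunctor.map (L.η.app X))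
    (hlam4 : ∀ X : C, L.μ.app (P.toFunctor.obj X) ≫ lam.app X =
      L.toFunctor.map (lam.app X) ≫ lam.app (L.toFunctor.obj X) ≫
        P.toFunctor.map (L.μ.app X))
    -- the Yang–Baxter equation
    (hYB : ∀ X : C, L.toFunctor.map (ψ.app X) ≫ φ.app (P.toFunctor.obj X) ≫
        K.map (U.map (lam.app X)) =
      lam.app (K.obj (U.obj X)) ≫ P.toFunctor.map (φ.app X) ≫ ψ.app (L.toFunctor.obj X)) :
    -- then δ := (KU)λ ∘ φP is a distributive law of the monad L over the composite monad KU∘P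
    let δ : ∀ X : C, L.toFunctor.obj (K.obj (U.obj (P.toFunctor.obj X))) ⟶
        K.obj (U.obj (P.toFunctor.obj (L.toFunctor.obj X))) :=
      fun X => φ.app (P.toFunctor.obj X) ≫ K.map (U.map (lam.app X))
    let μMP : ∀ Z : C, K.obj (U.obj (P.toFunctor.obj (K.obj (U.obj (P.toFunctor.obj Z))))) ⟶
        K.obj (U.obj (P.toFunctor.obj Z)) :=
      fun Z => K.map (U.map (ψ.app (P.toFunctor.obj Z))) ≫
        K.map (adj.counit.app (U.obj (P.toFunctor.obj (P.toFunctor.obj Z)))) ≫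
        K.map (U.map (P.μ.app Z))
    -- δ is natural
    (∀ (X Y : C) (f : X ⟶ Y),
      L.toFunctor.map (K.map (U.map (P.toFunctor.map f))) ≫ δ Y =
        δ X ≫ K.map (U.map (P.toFunctor.map (L.toFunctor.map f)))) ∧
    -- δ is compatible with the unit of KU∘P
    (∀ X : C, L.toFunctor.map (P.η.app X ≫ adj.unit.app (P.toFunctor.obj X)) ≫ δ X =
      P.η.app (L.toFunctor.obj X) ≫ adj.unit.app (P.toFunctor.obj (L.toFunctor.obj X))) ∧
    -- δ is compatible with the multiplication of KU∘P
    (∀ X : C, L.toFunctor.map (μMP X) ≫ δ X =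
      δ (K.obj (U.obj (P.toFunctor.obj X))) ≫ K.map (U.map (P.toFunctor.map (δ X))) ≫
        μMP (L.toFunctor.obj X)) ∧
    -- δ is compatible with the unit of L
    (∀ X : C, L.η.app (K.obj (U.obj (P.toFunctor.obj X))) ≫ δ X =
      K.map (U.map (P.toFunctor.map (L.η.app X)))) ∧
    -- δ is compatible with the multiplication of L
    (∀ X : C, L.μ.app (K.obj (U.obj (P.toFunctor.obj X))) ≫ δ X =
      L.toFunctor.map (δ X) ≫ δ (L.toFunctor.obj X) ≫
        K.map (U.map (P.toFunctor.map (L.μ.app X)))) :=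
  stmt8_general U K adj L P φ ψ lam hφ1 hφ2 hφ3 hφ4 hlam1 hlam2 hlam3 hlam4 hYB
end

section
/- Let B be an endofunctor on Set such that for every set Z the cofree B-coalgebra on Z exists (the final Z × B(·)-coalgebra). Let L be the list monad, λ : LB ⇒ BL a distributive law of the monad L over the functor B, and p : At → B(L(At)) a function with induced λ-bialgebra (L(At), ++, p*) where p* = B(++) ∘ λ_{L At} ∘ L(p). Let (Ω, c) be the final L(At) × B(·)-coalgebra, equipped with the L-algebra ⧺ : L(Ω) → Ω obtained by finality from the coalgebra (id × B(⧺)) ∘ λ' ∘ L(c), where λ' is the induced distributive law of L over L(At) × B(·). Then the unique coalgebra morphism ⟦·⟧ : L(At) → Ω from (L(At), ⟨id, p*⟩) to (Ω, c) is also an L-algebra morphism; consequently, for all lists l_1, …, l_k of atoms, ⟦l_1 ++ … ++ l_k⟧ = ⟦l_1⟧ ⧺ … ⧺ ⟦l_k⟧. -/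
/-!
Both `ls ↦ ⟦ls.flatten⟧` and `ls ↦ ⧺ (ls.map ⟦·⟧)` are coalgebra morphisms from the lifted
coalgebra `λ' ∘ L⟨id, p*⟩` on `L(L(At))` into the final `L(At) × B(·)`-coalgebra, so finality
makes them equal. For the first, `++` is itself a coalgebra morphism: this is the pentagon law of
the bialgebra `(L(At), ++, p*)`, which comes from the multiplication law of `λ`. For the second,
`L` maps coalgebra morphisms to morphisms between the lifted coalgebras (naturality of `λ`), and
`⧺` is a coalgebra morphism by construction.
-/

open CategoryTheory

universe u

namespace ListDistributiveLaw

variable {B : Type u ⥤ Type u}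

theorem map_ofHom_map_ofHom {X Y Z : Type u} (f : X → Y) (g : Y → Z) (x : B.obj X) :
    B.map (TypeCat.ofHom g) (B.map (TypeCat.ofHom f) x) = B.map (TypeCat.ofHom (g ∘ f)) x := by
  rw [← Functor.map_comp_apply]
  rfl

def IsCoalgHom {Z X Y : Type u} (k : X → Z × B.obj X) (d : Y → Z × B.obj Y) (f : X → Y) : Prop :=
  ∀ x, d (f x) = ((k x).1, B.map (TypeCat.ofHom f) (k x).2)

theorem IsCoalgHom.comp {Z X Y W : Type u} {k : X → Z × B.obj X} {d : Y → Z × B.obj Y}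
    {e : W → Z × B.obj W} {g : Y → W} {f : X → Y} (hg : IsCoalgHom d e g) (hf : IsCoalgHom k d f) :
    IsCoalgHom k e (g ∘ f) := fun x => by
  rw [Function.comp_apply, hg, hf, map_ofHom_map_ofHom]

variable (lamB : ∀ X : Type u, List (B.obj X) → B.obj (List X))

/-- `listLift lamB k` is `λ' ∘ L(k)`. -/
def listLift {A X : Type u} (k : X → List A × B.obj X) (xs : List X) : List A × B.obj (List X) :=
  ((xs.map fun x => (k x).1).flatten, lamB X (xs.map fun x => (k x).2))

/-- `kleisliLift lamB p` is `p* = B(++) ∘ λ ∘ L(p)`. -/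
def kleisliLift {A : Type u} (p : A → B.obj (List A)) (l : List A) : B.obj (List A) :=
  B.map (TypeCat.ofHom List.flatten) (lamB (List A) (l.map p))

variable {lamB}

theorem IsCoalgHom.listMap
    (hnat : ∀ (X Y : Type u) (f : X → Y) (l : List (B.obj X)),
      lamB Y (l.map (B.map (TypeCat.ofHom f))) = B.map (TypeCat.ofHom (List.map f)) (lamB X l))
    {A X Y : Type u} {k : X → List A × B.obj X} {d : Y → List A × B.obj Y} {f : X → Y}
    (hf : IsCoalgHom k d f) : IsCoalgHom (listLift lamB k) (listLift lamB d) (List.map f) := by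
  intro xs
  have hfst : (fun x => (d (f x)).1) = fun x => (k x).1 := funext fun x => by rw [hf]
  have hsnd : (fun x => (d (f x)).2) = fun x => B.map (TypeCat.ofHom f) (k x).2 :=
    funext fun x => by rw [hf]
  simp only [listLift, List.map_map, Function.comp_def, hfst, hsnd]
  rw [← hnat, List.map_map]
  rfl

theorem isCoalgHom_flatten
    (hnat : ∀ (X Y : Type u) (f : X → Y) (l : List (B.obj X)),
      lamB Y (l.map (B.map (TypeCat.ofHom f))) = B.map (TypeCat.ofHom (List.map f)) (lamB X l))
    (hmult : ∀ (X : Type u) (ll : List (List (B.obj X))),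
      lamB X ll.flatten = B.map (TypeCat.ofHom (List.flatten (α := X))) (lamB (List X) (ll.map (lamB X))))
    {A : Type u} (p : A → B.obj (List A)) :
    IsCoalgHom (listLift lamB fun l => (l, kleisliLift lamB p l)) (fun l => (l, kleisliLift lamB p l))
      List.flatten := by
  intro ls
  refine Prod.ext (by simp [listLift]) ?_
  let inner : List (B.obj (List (List A))) := ls.map fun l => lamB (List A) (l.map p)
  calc kleisliLift lamB p ls.flatten
      = B.map (TypeCat.ofHom List.flatten) (lamB (List A) (ls.map (List.map p)).flatten) := by
        rw [kleisliLift, List.map_flatten]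
    _ = B.map (TypeCat.ofHom (List.flatten ∘ List.flatten)) (lamB (List (List A)) inner) := by
        rw [hmult, List.map_map, map_ofHom_map_ofHom]
        rfl
    _ = B.map (TypeCat.ofHom (List.flatten ∘ List.map List.flatten)) (lamB (List (List A)) inner) := by
        rw [show (List.flatten ∘ List.flatten : List (List (List A)) → List A) =
          List.flatten ∘ List.map List.flatten from funext fun _ => List.flatten_flatten]
    _ = B.map (TypeCat.ofHom List.flatten) (lamB (List A) (ls.map (kleisliLift lamB p))) := by
        rw [← map_ofHom_map_ofHom, ← hnat, List.map_map]
        rfl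

end ListDistributiveLaw

open ListDistributiveLaw

theorem stmt14_general (At : Type u) (B : Type u ⥤ Type u)
    (lamB : ∀ X : Type u, List (B.obj X) → B.obj (List X))
    (hnat : ∀ (X Y : Type u) (f : X → Y) (l : List (B.obj X)),
      lamB Y (l.map (B.map (TypeCat.ofHom f))) = B.map (TypeCat.ofHom (List.map f)) (lamB X l))
    (hmult : ∀ (X : Type u) (ll : List (List (B.obj X))),
      lamB X ll.flatten = B.map (TypeCat.ofHom (List.flatten (α := X))) (lamB (List X) (ll.map (lamB X))))
    (p : At → B.obj (List At))
    -- (Ω, c) is the final L(At) × B(·)-coalgebra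
    (Ω : Type u) (c : Ω → List At × B.obj Ω)
    (hfinal : ∀ (Y : Type u) (q : Y → List At × B.obj Y), ∃! f : Y → Ω,
      ∀ y, c (f y) = ((q y).1, B.map (TypeCat.ofHom f) (q y).2))
    -- ⧺ is the L-algebra obtained by finality from (id × B(⧺)) ∘ λ' ∘ L(c)
    (conc : List Ω → Ω)
    (hconc : ∀ ws : List Ω,
      c (conc ws) = ((ws.map (fun w => (c w).1)).flatten,
        B.map (TypeCat.ofHom conc) (lamB Ω (ws.map (fun w => (c w).2)))))
    -- ⟦·⟧ is the unique coalgebra morphism from (L(At), ⟨id, p*⟩), where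
    -- p* = B(++) ∘ λ_{L At} ∘ L(p)
    (sem : List At → Ω)
    (hsem : ∀ l : List At,
      c (sem l) = (l, B.map (TypeCat.ofHom sem) (B.map (TypeCat.ofHom (List.flatten (α := At))) (lamB (List At) (l.map p))))) :
    ∀ ls : List (List At), sem ls.flatten = conc (ls.map sem) := by
  intro ls
  have hsem' : IsCoalgHom (fun l => (l, kleisliLift lamB p l)) c sem := hsem
  have hconc' : IsCoalgHom (listLift lamB c) c conc := hconc
  have hflatten := hsem'.comp (isCoalgHom_flatten hnat hmult p)
  have hmapConc := hconc'.comp (hsem'.listMap hnat)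
  exact congrFun ((hfinal _ _).unique hflatten hmapConc) ls

/-- given a behaviour functor `B` on `Set` with cofree coalgebras, a
distributive law `λ : LB ⇒ BL` of the list monad over `B`, and a program
`p : At → B(L(At))` with induced λ-bialgebra `(L(At), ++, p*)`, the unique coalgebra
morphism `⟦·⟧ : L(At) → Ω` into the final `L(At) × B(·)`-coalgebra (equipped with the
`L`-algebra `⧺` obtained by finality) is an `L`-algebra morphism; consequently
`⟦l₁ ++ … ++ l_k⟧ = ⟦l₁⟧ ⧺ … ⧺ ⟦l_k⟧`. -/
theorem stmt14 (At : Type u) (B : Type u ⥤ Type u)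
    (lamB : ∀ X : Type u, List (B.obj X) → B.obj (List X))
    (hnat : ∀ (X Y : Type u) (f : X → Y) (l : List (B.obj X)),
      lamB Y (l.map (B.map (TypeCat.ofHom f))) = B.map (TypeCat.ofHom (List.map f)) (lamB X l))
    (hunit : ∀ (X : Type u) (b : B.obj X), lamB X [b] = B.map (TypeCat.ofHom (fun x : X => [x])) b)
    (hmult : ∀ (X : Type u) (ll : List (List (B.obj X))),
      lamB X ll.flatten = B.map (TypeCat.ofHom (List.flatten (α := X))) (lamB (List X) (ll.map (lamB X))))
    -- the cofree B-coalgebra on Z exists for every Z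
    (hcofree : ∀ Z : Type u, ∃ (W : Type u) (d : W → Z × B.obj W),
      ∀ (Y : Type u) (q : Y → Z × B.obj Y), ∃! f : Y → W,
        ∀ y, d (f y) = ((q y).1, B.map (TypeCat.ofHom f) (q y).2))
    (p : At → B.obj (List At))
    -- (Ω, c) is the final L(At) × B(·)-coalgebra
    (Ω : Type u) (c : Ω → List At × B.obj Ω)
    (hfinal : ∀ (Y : Type u) (q : Y → List At × B.obj Y), ∃! f : Y → Ω,
      ∀ y, c (f y) = ((q y).1, B.map (TypeCat.ofHom f) (q y).2))
    -- ⧺ is the L-algebra obtained by finality from (id × B(⧺)) ∘ λ' ∘ L(c)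
    (conc : List Ω → Ω)
    (hconc : ∀ ws : List Ω,
      c (conc ws) = ((ws.map (fun w => (c w).1)).flatten,
        B.map (TypeCat.ofHom conc) (lamB Ω (ws.map (fun w => (c w).2)))))
    -- ⟦·⟧ is the unique coalgebra morphism from (L(At), ⟨id, p*⟩), where
    -- p* = B(++) ∘ λ_{L At} ∘ L(p)
    (sem : List At → Ω)
    (hsem : ∀ l : List At,
      c (sem l) = (l, B.map (TypeCat.ofHom sem) (B.map (TypeCat.ofHom (List.flatten (α := At))) (lamB (List At) (l.map p))))) :
    ∀ ls : List (List At), sem ls.flatten = conc (ls.map sem) :=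
  stmt14_general At B lamB hnat hmult p Ω c hfinal conc hconc sem hsem
end
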